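/- If a finite sum ∑_j c_j · s^{γ_j} · (1-s²)^{ν_j/2} with rational coefficients c_j and integer exponents γ_j, ν_j is identically equal to 1 for all s ∈ (0,1), then the sum of all terms in which γ_j or ν_j is odd is identically zero on (0,1); equivalently, the identity holds with only the terms having both γ_j and ν_j even. -/
import Mathlib

open scoped Classical
open Polynomial

lemma aux_ext (p q : Polynomial ℝ) (h : ∀ s ∈ Set.Ioo (0:ℝ) 1, p.eval s = q.eval s) :
    p = q := by
  have h0 : {x : ℝ | (p - q).IsRoot x}.Infinite := by
    apply Set.Infinite.mono (s := Set.Ioo (0:ℝ) 1) ?_ (Set.Ioo_infinite one_pos)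
    intro x hx
    simp [Polynomial.IsRoot, h x hx]
  have := Polynomial.eq_zero_of_infinite_isRoot _ h0
  linear_combination (norm := ring_nf) this

lemma aux_rm : Polynomial.rootMultiplicity (1:ℝ) (1 - Polynomial.X^2) = 1 := by
  have hfac : (1 - X^2 : ℝ[X]) = (X - C 1) * (-(X + C 1)) := by rw [Polynomial.C_1]; ring
  have hne : ((X - C 1) * (-(X + C 1)) : ℝ[X]) ≠ 0 := by
    rw [← hfac]
    intro hc
    have := congrArg (Polynomial.eval 0) hc
    simp at this
  rw [hfac, Polynomial.rootMultiplicity_mul hne,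
    Polynomial.rootMultiplicity_X_sub_C_self,
    Polynomial.rootMultiplicity_eq_zero (by simp [Polynomial.IsRoot])]

lemma aux_Q_eq_zero (Q R : Polynomial ℝ) (h : (1 - Polynomial.X^2) * Q^2 = R^2) :
    Q = 0 := by
  by_contra hQ
  have h1X : (1 - X^2 : ℝ[X]) ≠ 0 := by
    intro hc
    have := congrArg (Polynomial.eval 0) hc
    simp at this
  have hL : ((1 - X^2 : ℝ[X]) * Q^2) ≠ 0 := mul_ne_zero h1X (pow_ne_zero _ hQ)
  have hR : R ≠ 0 := by
    intro hc
    rw [hc] at h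
    simp at h
    tauto
  have e1 : Polynomial.rootMultiplicity (1:ℝ) ((1 - X^2) * Q^2)
      = 1 + 2 * Polynomial.rootMultiplicity (1:ℝ) Q := by
    rw [Polynomial.rootMultiplicity_mul hL, aux_rm, sq Q,
      Polynomial.rootMultiplicity_mul (mul_ne_zero hQ hQ)]
    ring
  have e2 : Polynomial.rootMultiplicity (1:ℝ) (R^2)
      = 2 * Polynomial.rootMultiplicity (1:ℝ) R := by
    rw [sq R, Polynomial.rootMultiplicity_mul (mul_ne_zero hR hR)]
    ring
  rw [h, e2] at e1
  omega

/-- If a finite sum `∑ c_j s^{γ_j} (1-s²)^{ν_j/2}` with rational coefficients and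
integer exponents is identically `1` on `(0,1)`, then the subsum over indices where
`γ_j` or `ν_j` is odd vanishes identically on `(0,1)`. -/
theorem stmt0 (M : ℕ) (c : Fin M → ℚ) (γ ν : Fin M → ℤ)
    (h : ∀ s ∈ Set.Ioo (0:ℝ) 1,
      ∑ j, (c j : ℝ) * s ^ (γ j) * (Real.sqrt (1 - s ^ 2)) ^ (ν j) = 1) :
    ∀ s ∈ Set.Ioo (0:ℝ) 1,
      ∑ j ∈ Finset.univ.filter (fun j => Odd (γ j) ∨ Odd (ν j)),
        (c j : ℝ) * s ^ (γ j) * (Real.sqrt (1 - s ^ 2)) ^ (ν j) = 0 := by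
  classical
  set N : ℕ := 1 + Finset.univ.sup (fun j : Fin M => max (γ j).natAbs (ν j).natAbs) with hNdef
  have hNb : ∀ j : Fin M, (γ j).natAbs ≤ N ∧ (ν j).natAbs + 1 ≤ N := by
    intro j
    have h1 : max (γ j).natAbs (ν j).natAbs
        ≤ Finset.univ.sup (fun j : Fin M => max (γ j).natAbs (ν j).natAbs) :=
      Finset.le_sup (f := fun j : Fin M => max (γ j).natAbs (ν j).natAbs)
        (Finset.mem_univ j)
    have h2 := le_max_left (γ j).natAbs (ν j).natAbs
    have h3 := le_max_right (γ j).natAbs (ν j).natAbs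
    omega
  have hγN : ∀ j, 0 ≤ γ j + (N:ℤ) := by intro j; have := hNb j; omega
  have hνN : ∀ j, 1 ≤ ν j + 2*(N:ℤ) := by intro j; have := hNb j; omega
  set a : Fin M → ℕ := fun j => (γ j + (N:ℤ)).toNat with hadef
  set m : Fin M → ℕ := fun j => (ν j + 2*(N:ℤ)).toNat with hmdef
  set e : Fin M → ℕ := fun j => m j / 2 with hedef
  have haz : ∀ j, (a j : ℤ) = γ j + N := fun j => Int.toNat_of_nonneg (hγN j)
  have hmz : ∀ j, (m j : ℤ) = ν j + 2*N := fun j =>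
    Int.toNat_of_nonneg (by have := hνN j; omega)
  set pol : Fin M → ℝ[X] := fun j => C (c j : ℝ) * X ^ (a j) * (1 - X^2) ^ (e j) with hpoldef
  -- key pointwise identity
  have key : ∀ j : Fin M, ∀ s : ℝ, 0 < s → s < 1 →
      (pol j).eval s * (if Odd (ν j) then Real.sqrt (1 - s^2) else 1)
        = s^N * (1 - s^2)^N * ((c j : ℝ) * s ^ (γ j) * (Real.sqrt (1 - s^2)) ^ (ν j)) := by
    intro j s hs0 hs1
    have h1s : (0:ℝ) < 1 - s^2 := by nlinarith
    set w := Real.sqrt (1 - s^2) with hw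
    have hw0 : 0 < w := Real.sqrt_pos.mpr h1s
    have hw2 : w^2 = 1 - s^2 := Real.sq_sqrt h1s.le
    have hsa : s ^ (a j) = s ^ N * s ^ (γ j) := by
      have hc : ((a j : ℤ)) = (N:ℤ) + γ j := by rw [haz j]; ring
      rw [← zpow_natCast s (a j), hc, zpow_add₀ (ne_of_gt hs0), zpow_natCast]
    have hwm : w ^ (m j) = w ^ (2*N) * w ^ (ν j) := by
      have hc : ((m j : ℤ)) = ((2*N : ℕ) : ℤ) + ν j := by rw [hmz j]; push_cast; ring
      rw [← zpow_natCast w (m j), hc, zpow_add₀ (ne_of_gt hw0), zpow_natCast]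
    have hme : m j = 2 * e j + (if Odd (ν j) then 1 else 0) := by
      have h1 := hmz j
      have he : e j = m j / 2 := rfl
      by_cases ho : Odd (ν j)
      · rw [if_pos ho]
        obtain ⟨k, hk⟩ := ho
        omega
      · rw [if_neg ho]
        rw [Int.not_odd_iff_even] at ho
        obtain ⟨k, hk⟩ := ho
        omega
    have hwsplit : w ^ (m j) = (1 - s^2)^(e j) * (if Odd (ν j) then w else 1) := by
      rw [hme, pow_add, pow_mul, hw2]
      by_cases ho : Odd (ν j) <;> simp [ho]
    have heval : (pol j).eval s = (c j : ℝ) * s ^ (a j) * (1 - s^2)^(e j) := by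
      simp [hpoldef]
    have h1 : (1 - s^2)^(e j) * (if Odd (ν j) then w else 1) = (1 - s^2)^N * w ^ (ν j) := by
      rw [← hwsplit, hwm, pow_mul, hw2]
    rw [heval, hsa]
    calc ((c j : ℝ) * (s ^ N * s ^ (γ j)) * (1 - s^2)^(e j))
        * (if Odd (ν j) then w else 1)
        = ((c j : ℝ) * (s ^ N * s ^ (γ j)))
          * ((1 - s^2)^(e j) * (if Odd (ν j) then w else 1)) := by ring
      _ = ((c j : ℝ) * (s ^ N * s ^ (γ j))) * ((1 - s^2)^N * w ^ (ν j)) := by rw [h1]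
      _ = s^N * (1 - s^2)^N * ((c j : ℝ) * s ^ (γ j) * w ^ (ν j)) := by ring
  set P : ℝ[X] := ∑ j ∈ Finset.univ.filter (fun j => ¬ Odd (ν j)), pol j with hPdef
  set Q : ℝ[X] := ∑ j ∈ Finset.univ.filter (fun j => Odd (ν j)), pol j with hQdef
  have hQe : ∀ s : ℝ, Q.eval s
      = ∑ j ∈ Finset.univ.filter (fun j => Odd (ν j)), (pol j).eval s := by
    intro s; rw [hQdef, Polynomial.eval_finset_sum]
  have hPe : ∀ s : ℝ, P.eval s
      = ∑ j ∈ Finset.univ.filter (fun j => ¬ Odd (ν j)), (pol j).eval s := by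
    intro s; rw [hPdef, Polynomial.eval_finset_sum]
  -- global identity on (0,1)
  have hPQ : ∀ s : ℝ, 0 < s → s < 1 →
      P.eval s + Real.sqrt (1 - s^2) * Q.eval s = s^N * (1 - s^2)^N := by
    intro s hs0 hs1
    have hsum : ∑ j, (pol j).eval s * (if Odd (ν j) then Real.sqrt (1 - s^2) else 1)
        = s^N * (1 - s^2)^N := by
      rw [Finset.sum_congr rfl (fun j _ => key j s hs0 hs1), ← Finset.mul_sum]
      have hh := h s ⟨hs0, by simpa using hs1⟩
      rw [hh, mul_one]
    rw [← Finset.sum_filter_add_sum_filter_not Finset.univ (fun j => Odd (ν j))] at hsum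
    have e1 : ∑ j ∈ Finset.univ.filter (fun j => Odd (ν j)),
        (pol j).eval s * (if Odd (ν j) then Real.sqrt (1 - s^2) else 1)
        = Real.sqrt (1 - s^2) * Q.eval s := by
      rw [hQe, Finset.mul_sum]
      apply Finset.sum_congr rfl
      intro j hj
      rw [Finset.mem_filter] at hj
      rw [if_pos hj.2, mul_comm]
    have e2 : ∑ j ∈ Finset.univ.filter (fun j => ¬ Odd (ν j)),
        (pol j).eval s * (if Odd (ν j) then Real.sqrt (1 - s^2) else 1) = P.eval s := by
      rw [hPe]
      apply Finset.sum_congr rfl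
      intro j hj
      rw [Finset.mem_filter] at hj
      rw [if_neg hj.2, mul_one]
    rw [e1, e2] at hsum
    linarith
  -- Q vanishes
  have hQ0 : Q = 0 := by
    set R : ℝ[X] := X^N * (1 - X^2)^N - P with hRdef
    have hR : ∀ s : ℝ, 0 < s → s < 1 →
        R.eval s = Real.sqrt (1 - s^2) * Q.eval s := by
      intro s hs0 hs1
      have := hPQ s hs0 hs1
      simp only [hRdef, Polynomial.eval_sub, Polynomial.eval_mul, Polynomial.eval_pow,
        Polynomial.eval_one, Polynomial.eval_X]
      linarith
    apply aux_Q_eq_zero Q R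
    apply aux_ext
    intro s hs
    obtain ⟨hs0, hs1⟩ := hs
    have h1s : (0:ℝ) < 1 - s^2 := by nlinarith
    have hw2 : (Real.sqrt (1 - s^2))^2 = 1 - s^2 := Real.sq_sqrt h1s.le
    have hR2 : (R.eval s)^2 = (1 - s^2) * (Q.eval s)^2 := by
      rw [hR s hs0 hs1, mul_pow, hw2]
    simp only [Polynomial.eval_mul, Polynomial.eval_pow, Polynomial.eval_sub,
      Polynomial.eval_one, Polynomial.eval_X]
    linarith
  -- P is determined
  have hP : P = X^N * (1 - X^2)^N := by
    apply aux_ext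
    intro s hs
    obtain ⟨hs0, hs1⟩ := hs
    have := hPQ s hs0 hs1
    rw [hQ0] at this
    simp only [Polynomial.eval_zero, mul_zero, add_zero] at this
    simp only [Polynomial.eval_mul, Polynomial.eval_pow, Polynomial.eval_sub,
      Polynomial.eval_one, Polynomial.eval_X]
    linarith
  -- sign lemma
  have hsgn : ∀ j : Fin M,
      ((-1:ℝ))^(a j) = (-1)^N * (if Odd (γ j) then (-1:ℝ) else 1) := by
    intro j
    have hp : Odd (a j + N) ↔ Odd (γ j) := by
      have hz := haz j
      rw [Nat.odd_iff, Int.odd_iff]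
      omega
    have hNN : ((-1:ℝ))^N * (-1)^N = 1 := by
      rw [← pow_add]
      exact Even.neg_one_pow ⟨N, rfl⟩
    have hstep : ((-1:ℝ))^(a j)
        = ((-1:ℝ))^(a j + N) * (-1)^N := by
      rw [pow_add, mul_assoc, hNN, mul_one]
    by_cases hg : Odd (γ j)
    · rw [if_pos hg, hstep, Odd.neg_one_pow (hp.mpr hg)]
      ring
    · rw [if_neg hg, hstep]
      have : Even (a j + N) := by
        have hz := haz j
        rw [Int.not_odd_iff_even, Int.even_iff] at hg
        rw [Nat.even_iff]
        omega
      rw [Even.neg_one_pow this]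
      ring
  -- odd-γ, even-ν part vanishes
  have hodd : ∀ s : ℝ, 0 < s → s < 1 →
      ∑ j ∈ Finset.univ.filter (fun j => Odd (γ j) ∧ ¬ Odd (ν j)), (pol j).eval s = 0 := by
    intro s hs0 hs1
    have h1s : (0:ℝ) < 1 - s^2 := by nlinarith
    have hps : P.eval s = s^N * (1-s^2)^N := by
      rw [hP]
      simp
    have hpn : P.eval (-s) = (-1)^N * (s^N * (1-s^2)^N) := by
      rw [hP]
      simp only [Polynomial.eval_mul, Polynomial.eval_pow, Polynomial.eval_sub,
        Polynomial.eval_one, Polynomial.eval_X]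
      rw [neg_pow, neg_sq]
      ring
    have hpolev : ∀ j : Fin M, ∀ t : ℝ,
        (pol j).eval t = (c j : ℝ) * t ^ (a j) * (1 - t^2)^(e j) := by
      intro j t; simp [hpoldef]
    have hneg : ∑ j ∈ Finset.univ.filter (fun j => ¬ Odd (ν j)),
        ((-1:ℝ))^(a j) * ((c j:ℝ) * s^(a j) * (1-s^2)^(e j))
        = (-1)^N * (s^N*(1-s^2)^N) := by
      rw [← hpn, hPe (-s)]
      apply Finset.sum_congr rfl
      intro j _
      rw [hpolev j (-s), neg_sq, neg_pow]
      ring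
    have hBsum : ∑ j ∈ Finset.univ.filter (fun j => ¬ Odd (ν j)),
        (if Odd (γ j) then (-1:ℝ) else 1) * ((pol j).eval s)
        = s^N*(1-s^2)^N := by
      have hne : ((-1:ℝ))^N ≠ 0 := pow_ne_zero _ (by norm_num)
      apply mul_left_cancel₀ hne
      rw [Finset.mul_sum, ← hneg]
      apply Finset.sum_congr rfl
      intro j _
      rw [hsgn j, hpolev j s]
      ring
    have hAsum : ∑ j ∈ Finset.univ.filter (fun j => ¬ Odd (ν j)), (pol j).eval s
        = s^N*(1-s^2)^N := by
      rw [← hPe, hps]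
    have h2t : 2 * (∑ j ∈ Finset.univ.filter (fun j => Odd (γ j) ∧ ¬ Odd (ν j)),
        (pol j).eval s)
        = ∑ j ∈ Finset.univ.filter (fun j => ¬ Odd (ν j)),
          ((pol j).eval s - (if Odd (γ j) then (-1:ℝ) else 1) * ((pol j).eval s)) := by
      rw [Finset.mul_sum, Finset.sum_filter, Finset.sum_filter]
      apply Finset.sum_congr rfl
      intro j _
      by_cases h1 : Odd (γ j) <;> by_cases h2 : Odd (ν j) <;> simp [h1, h2] <;> ring
    rw [Finset.sum_sub_distrib, hBsum, hAsum] at h2t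
    linarith
  -- assemble
  intro s hs
  obtain ⟨hs0, hs1⟩ := hs
  have h1s : (0:ℝ) < 1 - s^2 := by nlinarith
  have hXne : (s^N * (1 - s^2)^N : ℝ) ≠ 0 := by positivity
  apply mul_left_cancel₀ hXne
  rw [mul_zero, Finset.mul_sum]
  rw [Finset.sum_congr rfl (fun j _ => (key j s hs0 hs1).symm)]
  rw [← Finset.sum_filter_add_sum_filter_not
    (Finset.univ.filter (fun j => Odd (γ j) ∨ Odd (ν j))) (fun j => Odd (ν j)),
    Finset.filter_filter, Finset.filter_filter]
  have hf1 : (Finset.univ.filter (fun j : Fin M => (Odd (γ j) ∨ Odd (ν j)) ∧ Odd (ν j)))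
      = Finset.univ.filter (fun j => Odd (ν j)) :=
    Finset.filter_congr (fun j _ => by tauto)
  have hf2 : (Finset.univ.filter (fun j : Fin M => (Odd (γ j) ∨ Odd (ν j)) ∧ ¬ Odd (ν j)))
      = Finset.univ.filter (fun j => Odd (γ j) ∧ ¬ Odd (ν j)) :=
    Finset.filter_congr (fun j _ => by tauto)
  rw [hf1, hf2]
  have hfirst : ∑ j ∈ Finset.univ.filter (fun j => Odd (ν j)),
      (pol j).eval s * (if Odd (ν j) then Real.sqrt (1 - s^2) else 1) = 0 := by
    have hz : ∑ j ∈ Finset.univ.filter (fun j : Fin M => Odd (ν j)), (pol j).eval s = 0 := by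
      rw [← hQe, hQ0]
      simp
    calc ∑ j ∈ Finset.univ.filter (fun j => Odd (ν j)),
          (pol j).eval s * (if Odd (ν j) then Real.sqrt (1 - s^2) else 1)
        = ∑ j ∈ Finset.univ.filter (fun j : Fin M => Odd (ν j)),
          (pol j).eval s * Real.sqrt (1 - s^2) := by
          apply Finset.sum_congr rfl
          intro j hj
          rw [Finset.mem_filter] at hj
          rw [if_pos hj.2]
      _ = (∑ j ∈ Finset.univ.filter (fun j : Fin M => Odd (ν j)),
          (pol j).eval s) * Real.sqrt (1 - s^2) := by rw [Finset.sum_mul]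
      _ = 0 := by rw [hz, zero_mul]
  have hsecond : ∑ j ∈ Finset.univ.filter (fun j => Odd (γ j) ∧ ¬ Odd (ν j)),
      (pol j).eval s * (if Odd (ν j) then Real.sqrt (1 - s^2) else 1) = 0 := by
    rw [← hodd s hs0 hs1]
    apply Finset.sum_congr rfl
    intro j hj
    rw [Finset.mem_filter] at hj
    rw [if_neg hj.2.2, mul_one]
  rw [hfirst, hsecond, add_zero]
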